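/- arXiv:1002.4280 — 2 statements merged into one kernel-verified Lean document; each statement's English description precedes it below -/
import Mathlib

section
/- For m ≥ 2, the derived subalgebra H(m)² (the one-dimensional center spanned by z) is contained in the exterior center Z^∧(H(m)). -/
open Module Function

universe u v

/-! ### Product of Lie algebras -/

section ProdLie

variable (k : Type) [Field k]
variable (L₁ : Type*) (L₂ : Type*) [LieRing L₁] [LieRing L₂]

instance Prod.instLieRing : LieRing (L₁ × L₂) where
  bracket x y := (⁅x.1, y.1⁆, ⁅x.2, y.2⁆)
  add_lie x y z := by ext <;> exact add_lie _ _ _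
  lie_add x y z := by ext <;> exact lie_add _ _ _
  lie_self x := by ext <;> exact lie_self _
  leibniz_lie x y z := by ext <;> exact leibniz_lie _ _ _

instance Prod.instLieAlgebra [LieAlgebra k L₁] [LieAlgebra k L₂] :
    LieAlgebra k (L₁ × L₂) where
  lie_smul c x y := by ext <;> exact lie_smul _ _ _

end ProdLie

section Defs

variable (k : Type) [Field k]
variable (L : Type u) [LieRing L] [LieAlgebra k L]

/-- The derived subalgebra `L² = ⁅L, L⁆` as a Lie ideal. -/
def derived : LieIdeal k L := ⁅(⊤ : LieIdeal k L), (⊤ : LieIdeal k L)⁆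

/-- A Lie algebra is capable if it is isomorphic to `H / Z(H)` for some Lie algebra `H`. -/
def IsCapable : Prop :=
  ∃ (H : Type u) (_ : LieRing H) (_ : LieAlgebra k H),
    Nonempty (L ≃ₗ⁅k⁆ H ⧸ LieAlgebra.center k H)

/-- A surjective Lie algebra morphism with central kernel. -/
def IsCentralExtension {E : Type u} [LieRing E] [LieAlgebra k E] (φ : E →ₗ⁅k⁆ L) : Prop :=
  Function.Surjective φ ∧ φ.ker ≤ LieAlgebra.center k E

/-- The epicenter `Z^*(L)`: the intersection of the images `φ(Z(E))` over all central
extensions `φ : E → L`. -/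
def epicenter : LieIdeal k L :=
  sInf {I : LieIdeal k L |
    ∃ (E : Type u) (_ : LieRing E) (_ : LieAlgebra k E) (φ : E →ₗ⁅k⁆ L),
      IsCentralExtension k L φ ∧ (I : Set L) = φ '' (LieAlgebra.center k E)}

/-! ### The nonabelian exterior square -/

/-- The defining relations of the nonabelian exterior square of a Lie algebra. -/
def exteriorRels : Set (FreeLieAlgebra k (L × L)) :=
  {a | (∃ (x x' y : L), a = FreeLieAlgebra.of k (x + x', y) - FreeLieAlgebra.of k (x, y)
          - FreeLieAlgebra.of k (x', y)) ∨
       (∃ (x y y' : L), a = FreeLieAlgebra.of k (x, y + y') - FreeLieAlgebra.of k (x, y)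
          - FreeLieAlgebra.of k (x, y')) ∨
       (∃ (c : k) (x y : L), a = FreeLieAlgebra.of k (c • x, y) - c • FreeLieAlgebra.of k (x, y)) ∨
       (∃ (c : k) (x y : L), a = FreeLieAlgebra.of k (x, c • y) - c • FreeLieAlgebra.of k (x, y)) ∨
       (∃ (x x' y : L), a = FreeLieAlgebra.of k (⁅x, x'⁆, y) - FreeLieAlgebra.of k (x, ⁅x', y⁆)
          + FreeLieAlgebra.of k (x', ⁅x, y⁆)) ∨
       (∃ (x y y' : L), a = FreeLieAlgebra.of k (x, ⁅y, y'⁆) - FreeLieAlgebra.of k (⁅y', x⁆, y)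
          + FreeLieAlgebra.of k (⁅y, x⁆, y')) ∨
       (∃ (x y x' y' : L), a = ⁅FreeLieAlgebra.of k (x, y), FreeLieAlgebra.of k (x', y')⁆
          + FreeLieAlgebra.of k (⁅y, x⁆, ⁅x', y'⁆)) ∨
       (∃ (x : L), a = FreeLieAlgebra.of k (x, x))}

/-- The ideal of relations of the nonabelian exterior square. -/
noncomputable def exteriorIdeal : LieIdeal k (FreeLieAlgebra k (L × L)) :=
  LieSubmodule.lieSpan k _ (exteriorRels k L)

/-- The nonabelian exterior square `L ∧ L`. -/
abbrev ExteriorSquare := FreeLieAlgebra k (L × L) ⧸ exteriorIdeal k L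

variable {L} in
/-- The element `x ∧ y` of the nonabelian exterior square. -/
noncomputable def wedge (x y : L) : ExteriorSquare k L :=
  LieSubmodule.Quotient.mk' (exteriorIdeal k L) (FreeLieAlgebra.of k (x, y))

/-- The exterior center `Z^∧(L) = {x | x ∧ y = 0 for all y}`. -/
def exteriorCenter : Set L := {x | ∀ y : L, wedge k x y = 0}

end Defs

section Defs2

variable (k : Type) [Field k]
variable (L : Type u) [LieRing L] [LieAlgebra k L]

/-- The canonical free presentation `F(L) → L`. -/
noncomputable def pres : FreeLieAlgebra k L →ₗ⁅k⁆ L := FreeLieAlgebra.lift k id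

/-- The Schur multiplier computed from a presentation `ρ : F(L) → L'`,
namely `(ker ρ ∩ F²) / ⁅ker ρ, F⁆`. -/
abbrev multOf {L' : Type v} [LieRing L'] [LieAlgebra k L']
    (ρ : FreeLieAlgebra k L →ₗ⁅k⁆ L') : Type _ :=
  (ρ.ker ⊓ derived k (FreeLieAlgebra k L)).toSubmodule ⧸
    ((⁅ρ.ker, (⊤ : LieIdeal k (FreeLieAlgebra k L))⁆ :
        LieIdeal k (FreeLieAlgebra k L)).toSubmodule.comap
      (ρ.ker ⊓ derived k (FreeLieAlgebra k L)).toSubmodule.subtype)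

/-- The Schur multiplier `M(L) = (R ∩ F²)/⁅R, F⁆` for the canonical free
presentation `0 → R → F(L) → L → 0`. -/
noncomputable abbrev SchurMultiplier : Type _ := multOf k L (pres k L)

/-- The quotient map `L → L ⧸ N` as a morphism of Lie algebras. -/
def lieQuotMk (N : LieIdeal k L) : L →ₗ⁅k⁆ L ⧸ N :=
  { toLinearMap := (N : Submodule k L).mkQ
    map_lie' := rfl }

/-- The canonical presentation `F(L) → L ⧸ N` of a quotient of `L`. -/
noncomputable def presQ (N : LieIdeal k L) : FreeLieAlgebra k L →ₗ⁅k⁆ L ⧸ N :=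
  (lieQuotMk k L N).comp (pres k L)

end Defs2

section maps

variable (k : Type) [Field k]
variable (L : Type u) [LieRing L] [LieAlgebra k L]

lemma ker_le_kerQ (N : LieIdeal k L) : (pres k L).ker ≤ (presQ k L N).ker := by
  intro x hx
  rw [LieHom.mem_ker] at hx ⊢
  simp [presQ, LieHom.comp_apply, hx, lieQuotMk]

/-- The natural map `M(L) → M(L/N)` on Schur multipliers induced by a
(central) ideal `N` of `L`. -/
noncomputable def multMap (N : LieIdeal k L) :
    SchurMultiplier k L →ₗ[k] multOf k L (presQ k L N) :=
  Submodule.mapQ _ _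
    (Submodule.inclusion (by
      exact_mod_cast inf_le_inf_right (derived k (FreeLieAlgebra k L)) (ker_le_kerQ k L N)))
    (by
      intro x hx
      simp only [Submodule.mem_comap] at hx ⊢
      have hmono : (⁅(pres k L).ker, (⊤ : LieIdeal k (FreeLieAlgebra k L))⁆ :
          LieIdeal k (FreeLieAlgebra k L)) ≤
          ⁅(presQ k L N).ker, (⊤ : LieIdeal k (FreeLieAlgebra k L))⁆ :=
        LieSubmodule.mono_lie_left _ (ker_le_kerQ k L N)
      exact hmono hx)

end maps

section lift

variable {k : Type} [Field k]
variable {L : Type u} [LieRing L] [LieAlgebra k L]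
variable {L' : Type v} [LieRing L'] [LieAlgebra k L']

/-- Universal property of quotients of Lie algebras. -/
def lieQuotLift (I : LieIdeal k L) (f : L →ₗ⁅k⁆ L') (h : I ≤ f.ker) : (L ⧸ I) →ₗ⁅k⁆ L' :=
  { toLinearMap := (I : Submodule k L).liftQ f.toLinearMap (fun x hx => by
      have := h hx; rwa [LieHom.mem_ker] at this)
    map_lie' := by
      rintro ⟨x⟩ ⟨y⟩
      exact f.map_lie x y }

@[simp] lemma lieQuotLift_mk (I : LieIdeal k L) (f : L →ₗ⁅k⁆ L') (h : I ≤ f.ker) (x : L) :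
    lieQuotLift I f h (lieQuotMk k L I x) = f x := rfl

end lift

section extmaps

variable (k : Type) [Field k]
variable (L : Type u) [LieRing L] [LieAlgebra k L]

/-- `x ∧ y` rewritten via the quotient morphism. -/
lemma wedge_def (x y : L) :
    wedge k x y = lieQuotMk k _ (exteriorIdeal k L) (FreeLieAlgebra.of k (x, y)) := rfl

/-- The lift to the free Lie algebra of the map `(x, y) ↦ x ∧ y` valued in the
exterior square of a quotient of `L`. -/
noncomputable def extAux (N : LieIdeal k L) :
    FreeLieAlgebra k (L × L) →ₗ⁅k⁆ ExteriorSquare k (L ⧸ N) :=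
  FreeLieAlgebra.lift k fun p => wedge k (lieQuotMk k L N p.1) (lieQuotMk k L N p.2)

lemma wedge_mem_rel_zero {M : Type v} [LieRing M] [LieAlgebra k M]
    {a : FreeLieAlgebra k (M × M)} (ha : a ∈ exteriorRels k M) :
    lieQuotMk k _ (exteriorIdeal k M) a = 0 := by
  have h : a ∈ exteriorIdeal k M := LieSubmodule.subset_lieSpan ha
  show (exteriorIdeal k M : Submodule k (FreeLieAlgebra k (M × M))).mkQ a = 0
  rw [Submodule.mkQ_apply, Submodule.Quotient.mk_eq_zero]
  exact h

lemma extAux_rels (N : LieIdeal k L) : exteriorIdeal k L ≤ (extAux k L N).ker := by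
  rw [exteriorIdeal, LieSubmodule.lieSpan_le]
  intro a ha
  rw [SetLike.mem_coe, LieHom.mem_ker]
  set q := lieQuotMk k L N with hq
  have key : ∀ x y : L, extAux k L N (FreeLieAlgebra.of k (x, y)) =
      lieQuotMk k _ (exteriorIdeal k (L ⧸ N)) (FreeLieAlgebra.of k (q x, q y)) := by
    intro x y; rw [extAux, FreeLieAlgebra.lift_of_apply]; rfl
  obtain h|h|h|h|h|h|h|h := ha
  · obtain ⟨x, x', y, rfl⟩ := h
    simp only [map_sub, key]
    rw [← map_sub, ← map_sub]
    apply wedge_mem_rel_zero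
    exact Or.inl ⟨q x, q x', q y, by rw [map_add]⟩
  · obtain ⟨x, y, y', rfl⟩ := h
    simp only [map_sub, key]
    rw [← map_sub, ← map_sub]
    apply wedge_mem_rel_zero
    exact Or.inr (Or.inl ⟨q x, q y, q y', by rw [map_add]⟩)
  · obtain ⟨c, x, y, rfl⟩ := h
    simp only [map_sub, map_smul, key]
    rw [← map_smul (lieQuotMk k _ (exteriorIdeal k (L ⧸ N))) c
      (FreeLieAlgebra.of k (q x, q y)), ← map_sub]
    apply wedge_mem_rel_zero
    exact Or.inr (Or.inr (Or.inl ⟨c, q x, q y, rfl⟩))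
  · obtain ⟨c, x, y, rfl⟩ := h
    simp only [map_sub, map_smul, key]
    rw [← map_smul (lieQuotMk k _ (exteriorIdeal k (L ⧸ N))) c
      (FreeLieAlgebra.of k (q x, q y)), ← map_sub]
    apply wedge_mem_rel_zero
    exact Or.inr (Or.inr (Or.inr (Or.inl ⟨c, q x, q y, rfl⟩)))
  · obtain ⟨x, x', y, rfl⟩ := h
    simp only [map_sub, map_add, key]
    rw [← map_sub, ← map_add]
    apply wedge_mem_rel_zero
    refine Or.inr (Or.inr (Or.inr (Or.inr (Or.inl ⟨q x, q x', q y, ?_⟩))))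
    simp [LieHom.map_lie]
  · obtain ⟨x, y, y', rfl⟩ := h
    simp only [map_sub, map_add, key]
    rw [← map_sub, ← map_add]
    apply wedge_mem_rel_zero
    refine Or.inr (Or.inr (Or.inr (Or.inr (Or.inr (Or.inl ⟨q x, q y, q y', ?_⟩)))))
    simp [LieHom.map_lie]
  · obtain ⟨x, y, x', y', rfl⟩ := h
    simp only [map_add, LieHom.map_lie, key]
    rw [← LieHom.map_lie, ← map_add]
    apply wedge_mem_rel_zero
    refine Or.inr (Or.inr (Or.inr (Or.inr (Or.inr (Or.inr (Or.inl
      ⟨q x, q y, q x', q y', ?_⟩))))))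
    simp [LieHom.map_lie]
  · obtain ⟨x, rfl⟩ := h
    rw [key]
    apply wedge_mem_rel_zero
    exact Or.inr (Or.inr (Or.inr (Or.inr (Or.inr (Or.inr (Or.inr ⟨q x, rfl⟩))))))

/-- The natural morphism `L ∧ L → (L/N) ∧ (L/N)` of exterior squares. -/
noncomputable def extSqMap (N : LieIdeal k L) :
    ExteriorSquare k L →ₗ⁅k⁆ ExteriorSquare k (L ⧸ N) :=
  lieQuotLift (exteriorIdeal k L) (extAux k L N) (extAux_rels k L N)

/-- The commutator morphism `L ∧ L → L`, `x ∧ y ↦ ⁅x, y⁆`. -/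
noncomputable def commutatorMap : ExteriorSquare k L →ₗ⁅k⁆ L :=
  lieQuotLift (exteriorIdeal k L) (FreeLieAlgebra.lift k fun p : L × L => ⁅p.1, p.2⁆)
    (by
      rw [exteriorIdeal, LieSubmodule.lieSpan_le]
      intro a ha
      rw [SetLike.mem_coe, LieHom.mem_ker]
      obtain h|h|h|h|h|h|h|h := ha
      · obtain ⟨x, x', y, rfl⟩ := h
        simp [FreeLieAlgebra.lift_of_apply, add_lie]
      · obtain ⟨x, y, y', rfl⟩ := h
        simp [FreeLieAlgebra.lift_of_apply, lie_add]
      · obtain ⟨c, x, y, rfl⟩ := h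
        simp [FreeLieAlgebra.lift_of_apply, smul_lie]
      · obtain ⟨c, x, y, rfl⟩ := h
        simp [FreeLieAlgebra.lift_of_apply, lie_smul]
      · obtain ⟨x, x', y, rfl⟩ := h
        simp only [map_sub, map_add, FreeLieAlgebra.lift_of_apply, lie_lie]
        abel
      · obtain ⟨x, y, y', rfl⟩ := h
        simp only [map_sub, map_add, FreeLieAlgebra.lift_of_apply, lie_lie]
        rw [leibniz_lie x y' y, ← lie_skew y ⁅x, y'⁆]
        abel
      · obtain ⟨x, y, x', y', rfl⟩ := h
        simp only [map_add, LieHom.map_lie, FreeLieAlgebra.lift_of_apply]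
        rw [← lie_skew y x]
        simp
      · obtain ⟨x, rfl⟩ := h
        simp [FreeLieAlgebra.lift_of_apply])

end extmaps

section more

variable (k : Type) [Field k]
variable (L : Type u) [LieRing L] [LieAlgebra k L]

/-- A Lie algebra is a Heisenberg algebra `H(m)` (of dimension `2m + 1`) iff its derived
subalgebra coincides with its centre and is one-dimensional, and it has dimension `2m + 1`. -/
def IsHeisenberg (m : ℕ) : Prop :=
  derived k L = LieAlgebra.center k L ∧ Module.finrank k L = 2 * m + 1 ∧
    Module.finrank k (derived k L) = 1

/-- A vector space regarded as an abelian Lie algebra. -/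
def AbelianLieOf (V : Type v) : Type v := V

instance (V : Type v) [AddCommGroup V] : AddCommGroup (AbelianLieOf V) :=
  inferInstanceAs (AddCommGroup V)

instance (V : Type v) [AddCommGroup V] [Module k V] : Module k (AbelianLieOf V) :=
  inferInstanceAs (Module k V)

instance (V : Type v) [AddCommGroup V] : LieRing (AbelianLieOf V) where
  bracket _ _ := 0
  add_lie _ _ _ := by simp
  lie_add _ _ _ := by simp
  lie_self _ := rfl
  leibniz_lie _ _ _ := by simp

instance (V : Type v) [AddCommGroup V] [Module k V] : LieAlgebra k (AbelianLieOf V) where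
  lie_smul _ _ _ := by
    show (0 : AbelianLieOf V) = _ • (0 : AbelianLieOf V)
    simp

/-- A decomposition of `L` as the direct sum of a Heisenberg algebra `H(m)` and an
abelian Lie algebra of dimension `j`. -/
structure HeisenbergAbelianDecomp (m j : ℕ) where
  H : Type u
  A : Type u
  [instHL : LieRing H]
  [instHA : LieAlgebra k H]
  [instAL : LieRing A]
  [instAA : LieAlgebra k A]
  heis : IsHeisenberg k H m
  abel : IsLieAbelian A
  dimA : Module.finrank k A = j
  equiv : Nonempty (L ≃ₗ⁅k⁆ H × A)

/-- The projection `H × A → H` as a Lie algebra morphism. -/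
def lieFst (H A : Type u) [LieRing H] [LieAlgebra k H] [LieRing A] [LieAlgebra k A] :
    H × A →ₗ⁅k⁆ H :=
  { toLinearMap := LinearMap.fst k H A
    map_lie' := rfl }

end more

/-! The centralizer of any `y ∈ H(m)` has codimension at most one, while a subspace on which the
bracket vanishes has dimension at most `m + 1`. So for `m ≥ 2` the centralizer of `y` contains
`u, v` with `⁅u, v⁆ ≠ 0`, and `⁅u, v⁆` spans `H(m)²`; the Jacobi-type relation of the exterior
square gives `⁅u, v⁆ ∧ y = u ∧ ⁅v, y⁆ - v ∧ ⁅u, y⁆ = 0`. -/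

section Wedge

variable {k : Type} [Field k] {L : Type u} [LieRing L] [LieAlgebra k L]

lemma wedge_smul_left (c : k) (x y : L) : wedge k (c • x) y = c • wedge k x y := by
  have h := wedge_mem_rel_zero k (M := L) (Or.inr (Or.inr (Or.inl ⟨c, x, y, rfl⟩)))
  rwa [map_sub, map_smul, sub_eq_zero] at h

lemma wedge_smul_right (c : k) (x y : L) : wedge k x (c • y) = c • wedge k x y := by
  have h := wedge_mem_rel_zero k (M := L) (Or.inr (Or.inr (Or.inr (Or.inl ⟨c, x, y, rfl⟩))))
  rwa [map_sub, map_smul, sub_eq_zero] at h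

lemma wedge_zero_right (x : L) : wedge k x 0 = 0 := by
  simpa using wedge_smul_right (0 : k) x 0

lemma wedge_lie_left (x x' y : L) :
    wedge k ⁅x, x'⁆ y = wedge k x ⁅x', y⁆ - wedge k x' ⁅x, y⁆ := by
  have h := wedge_mem_rel_zero k (M := L)
    (Or.inr (Or.inr (Or.inr (Or.inr (Or.inl ⟨x, x', y, rfl⟩)))))
  rw [map_add, map_sub, sub_add_eq_add_sub, sub_eq_zero] at h
  exact eq_sub_of_add_eq h

lemma wedge_lie_eq_zero_of_lie_eq_zero {u v y : L} (hu : ⁅u, y⁆ = 0) (hv : ⁅v, y⁆ = 0) :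
    wedge k ⁅u, v⁆ y = 0 := by
  rw [wedge_lie_left, hu, hv, wedge_zero_right, wedge_zero_right, sub_zero]

end Wedge

lemma finrank_le_finrank_ker_add_finrank {K V W : Type*} [Field K] [AddCommGroup V] [Module K V]
    [AddCommGroup W] [Module K W] [Module.Finite K V] [Module.Finite K W] (f : V →ₗ[K] W) :
    finrank K V ≤ finrank K (LinearMap.ker f) + finrank K W := by
  have := f.finrank_range_add_finrank_ker
  have := Submodule.finrank_le (LinearMap.range f)
  omega

section Bracket

variable (k : Type) [Field k] (L : Type u) [LieRing L] [LieAlgebra k L]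

lemma lie_mem_derived (u v : L) : ⁅u, v⁆ ∈ derived k L :=
  LieSubmodule.lie_mem_lie (LieSubmodule.mem_top u) (LieSubmodule.mem_top v)

/-- The arguments are swapped so that the kernel is the centre. -/
def bracketToDerived : L →ₗ[k] L →ₗ[k] derived k L :=
  LinearMap.mk₂ k (fun u w => ⟨⁅w, u⁆, lie_mem_derived k L w u⟩)
    (fun _ _ _ => Subtype.ext (lie_add _ _ _)) (fun _ _ _ => Subtype.ext (lie_smul _ _ _))
    (fun _ _ _ => Subtype.ext (add_lie _ _ _)) (fun _ _ _ => Subtype.ext (smul_lie _ _ _))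

variable {k L}

@[simp] lemma coe_bracketToDerived_apply (u w : L) : (bracketToDerived k L u w : L) = ⁅w, u⁆ :=
  rfl

lemma ker_bracketToDerived :
    LinearMap.ker (bracketToDerived k L) = (LieAlgebra.center k L).toSubmodule := by
  ext u
  simp [LinearMap.ext_iff, Subtype.ext_iff, LieModule.mem_maxTrivSubmodule]

/-- The bracket induces `C → Hom(L ⧸ C, L²)` with kernel `C ∩ Z(L)`. -/
theorem finrank_le_of_lie_eq_zero [Module.Finite k L] (C : Submodule k L)
    (hC : ∀ u ∈ C, ∀ v ∈ C, ⁅u, v⁆ = 0) :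
    finrank k C ≤
      finrank k (LieAlgebra.center k L) + finrank k (L ⧸ C) * finrank k (derived k L) := by
  set g := (bracketToDerived k L).domRestrict C
  have hker : finrank k (LinearMap.ker g) ≤ finrank k (LieAlgebra.center k L) := by
    rw [LinearMap.ker_domRestrict, ker_bracketToDerived, ← Submodule.finrank_map_subtype_eq]
    exact Submodule.finrank_mono (Submodule.map_comap_le _ _)
  have hrange : LinearMap.range g ≤ LinearMap.range (LinearMap.lcomp k (derived k L) C.mkQ) := by
    rintro _ ⟨u, rfl⟩
    refine ⟨C.liftQ (g u) fun w hw => ?_, ?_⟩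
    · ext
      exact hC w hw u u.2
    · ext; rfl
  have hrange' : finrank k (LinearMap.range g) ≤ finrank k (L ⧸ C) * finrank k (derived k L) :=
    calc finrank k (LinearMap.range g)
        ≤ finrank k (LinearMap.range (LinearMap.lcomp k (derived k L) C.mkQ)) :=
          Submodule.finrank_mono hrange
      _ ≤ finrank k ((L ⧸ C) →ₗ[k] derived k L) := LinearMap.finrank_range_le _
      _ = _ := Module.finrank_linearMap k k _ _
  have := g.finrank_range_add_finrank_ker
  omega

end Bracket

theorem IsHeisenberg.exists_commute_lie_ne_zero {k : Type} [Field k] {L : Type u} [LieRing L]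
    [LieAlgebra k L] [Module.Finite k L] {m : ℕ} (hm : 2 ≤ m) (hL : IsHeisenberg k L m) (y : L) :
    ∃ u v : L, ⁅u, y⁆ = 0 ∧ ⁅v, y⁆ = 0 ∧ ⁅u, v⁆ ≠ 0 := by
  obtain ⟨hcen, hdim, hder⟩ := hL
  set C := LinearMap.ker ((bracketToDerived k L).flip y)
  have hmemC : ∀ u, u ∈ C ↔ ⁅u, y⁆ = 0 := fun u => by
    rw [LinearMap.mem_ker, Subtype.ext_iff, ← lie_skew, neg_eq_zero]
    rfl
  by_contra! hcomm
  have hC := finrank_le_of_lie_eq_zero C fun u hu v hv =>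
    hcomm u v ((hmemC u).1 hu) ((hmemC v).1 hv)
  have hcenter : finrank k (LieAlgebra.center k L) = 1 := hcen ▸ hder
  rw [hcenter, hder, mul_one] at hC
  have hCdim : finrank k L ≤ finrank k C + finrank k (derived k L) :=
    finrank_le_finrank_ker_add_finrank _
  rw [hdim, hder] at hCdim
  have := Submodule.finrank_quotient_add_finrank C
  omega

/-- for `m ≥ 2` the derived subalgebra of `H(m)` lies in the exterior
center `Z^∧(H(m))`. -/
theorem heisenberg_derived_le_exteriorCenter (k : Type) [Field k] (L : Type u) [LieRing L]
    [LieAlgebra k L] [Module.Finite k L] (m : ℕ) (hm : 2 ≤ m) (hL : IsHeisenberg k L m) :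
    (derived k L : Set L) ⊆ exteriorCenter k L := by
  intro x hx y
  obtain ⟨u, v, hu, hv, huv⟩ := hL.exists_commute_lie_ne_zero hm y
  have hz : (⟨⁅u, v⁆, lie_mem_derived k L u v⟩ : derived k L) ≠ 0 :=
    fun h => huv (congrArg Subtype.val h)
  obtain ⟨c, hc⟩ := (finrank_eq_one_iff_of_nonzero' _ hz).mp hL.2.2 ⟨x, hx⟩
  have hx : x = c • ⁅u, v⁆ := (congrArg Subtype.val hc).symm
  rw [hx, wedge_smul_left, wedge_lie_eq_zero_of_lie_eq_zero hu hv, smul_zero]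
end

section
/- The Lie algebra H(1) ⊕ A(1) is capable; moreover its Schur multiplier has dimension 4, while M((H(1) ⊕ A(1))/A(1)) = M(H(1)) has dimension 2. -/
open Module Function

universe u v

/-!
Write `H = ⟨x, y, z⟩` with `⁅x, y⁆ = z` central, and `A = ⟨w⟩`. In the Hopf formula
`M = (R ∩ F²) / ⁅R, F⁆`, the derived algebra `F²` is spanned modulo `⁅R, F⁆` by the brackets of
basis vectors, and all of them except `⁅x, y⁆` are relations. So `M(H)` is spanned by the
classes of `⁅x, z⁆, ⁅y, z⁆`, and `M(H ⊕ A)` by those and `⁅x, w⁆, ⁅y, w⁆`, because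
`⁅z, w⁆ = ⁅⁅x, y⁆, w⁆ ∈ ⁅R, F⁆` by the Jacobi identity. For the presentation of `(H ⊕ A) / A`
the generator `w` is itself a relation, so every bracket with `w` lies in `⁅R, F⁆`.
These classes are independent because the 2-cocycles `x ∧ z, y ∧ z, x ∧ w, y ∧ w` pair
with them as a dual basis, through the central extensions they define. The extension `E` of
`H ⊕ A` by all four cocycles has centre exactly `k⁴`, so `H ⊕ A ≅ E / Z(E)` is capable.
-/

section LinearAlgebra

variable {k W : Type*} [Field k] [AddCommGroup W] [Module k W]

theorem Submodule.inf_le_of_le_span_singleton_sup {R D G : Submodule k W} {h : W}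
    (hD : D ≤ k ∙ h ⊔ G) (hG : G ≤ R) (hh : h ∉ R) : R ⊓ D ≤ G :=
  calc R ⊓ D ≤ R ⊓ (k ∙ h ⊔ G) := inf_le_inf_left R hD
    _ = R ⊓ (k ∙ h) ⊔ G := (inf_sup_assoc_of_le _ hG).symm
    _ = G := by
      rw [(Submodule.disjoint_span_singleton.mpr fun h' => absurd h' hh).eq_bot, bot_sup_eq]

/-- `μ` induces an isomorphism `K ⧸ (T ⊓ K) ≃ kᵐ`. -/
theorem Submodule.finrank_quotient_comap_subtype_eq {K T : Submodule k W} {m : ℕ} (g : Fin m → W)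
    (hg : ∀ i, g i ∈ K) (hK : K ≤ span k (Set.range g) ⊔ T) (μ : W →ₗ[k] Fin m → k)
    (hT : T ≤ LinearMap.ker μ) (hμ : ∀ i, μ (g i) = Pi.single i 1) :
    finrank k (K ⧸ T.comap K.subtype) = m := by
  have hμg (c : Fin m → k) : μ (∑ i, c i • g i) = c := by
    simp only [map_sum, map_smul, hμ]
    exact (pi_eq_sum_univ' c).symm
  have hker : LinearMap.ker (μ ∘ₗ K.subtype) ≤ T.comap K.subtype := by
    rintro ⟨x, hxK⟩ hx
    obtain ⟨a, ha, t, ht, rfl⟩ := Submodule.mem_sup.mp (hK hxK)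
    obtain ⟨c, rfl⟩ := (Submodule.mem_span_range_iff_exists_fun k).mp ha
    have hc : c = 0 := by simpa [hμg, LinearMap.mem_ker.mp (hT ht)] using hx
    simpa [hc] using ht
  let μ' := (T.comap K.subtype).liftQ (μ ∘ₗ K.subtype) fun x hx => hT hx
  have hbij : Function.Bijective μ' := by
    refine ⟨LinearMap.ker_eq_bot.mp (Submodule.ker_liftQ_eq_bot _ _ _ hker), fun c => ?_⟩
    exact ⟨Submodule.Quotient.mk ⟨∑ i, c i • g i, sum_mem fun i _ => K.smul_mem _ (hg i)⟩, hμg c⟩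
  rw [(LinearEquiv.ofBijective μ' hbij).finrank_eq, Module.finrank_fin_fun]

end LinearAlgebra

section LieBrackets

variable {k F : Type*} [CommRing k] [LieRing F] [LieAlgebra k F] {N : Submodule k F}

theorem Submodule.lie_mem_of_swap {a b : F} (h : ⁅b, a⁆ ∈ N) : ⁅a, b⁆ ∈ N := by
  rw [← lie_skew]
  exact neg_mem h

theorem forall_lie_mem_fin_three (v : Fin 3 → F) (h01 : ⁅v 0, v 1⁆ ∈ N)
    (h02 : ⁅v 0, v 2⁆ ∈ N) (h12 : ⁅v 1, v 2⁆ ∈ N) (i j : Fin 3) : ⁅v i, v j⁆ ∈ N := by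
  fin_cases i <;> fin_cases j <;> simp [h01, h02, h12, N.lie_mem_of_swap h01,
    N.lie_mem_of_swap h02, N.lie_mem_of_swap h12]

theorem forall_lie_mem_basis_prod {H A : Type*} [AddCommGroup H] [Module k H] [AddCommGroup A]
    [Module k A] (b : Basis (Fin 3) k H) (cA : Basis (Fin 1) k A) (f : H × A → F)
    (h01 : ⁅f (b 0, 0), f (b 1, 0)⁆ ∈ N) (h02 : ⁅f (b 0, 0), f (b 2, 0)⁆ ∈ N)
    (h12 : ⁅f (b 1, 0), f (b 2, 0)⁆ ∈ N) (hw : ∀ i, ⁅f (b i, 0), f (0, cA 0)⁆ ∈ N)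
    (p q : Fin 3 ⊕ Fin 1) : ⁅f (b.prod cA p), f (b.prod cA q)⁆ ∈ N := by
  have hw' (i : Fin 3) (j : Fin 1) : ⁅f (b.prod cA (.inl i)), f (b.prod cA (.inr j))⁆ ∈ N := by
    obtain rfl := Subsingleton.elim j 0
    simpa using hw i
  rcases p with i | i <;> rcases q with j | j
  · simpa using forall_lie_mem_fin_three (fun i => f (b i, 0)) h01 h02 h12 i j
  · exact hw' i j
  · exact N.lie_mem_of_swap (hw' j i)
  · rw [Subsingleton.elim i j, lie_self]
    exact zero_mem N

end LieBrackets

theorem LieHom.lie_top_le_ker_of_map_mem_center {k F E : Type*} [CommRing k] [LieRing F]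
    [LieAlgebra k F] [LieRing E] [LieAlgebra k E] (Φ : F →ₗ⁅k⁆ E) {R : LieIdeal k F}
    (hR : ∀ f ∈ R, Φ f ∈ LieAlgebra.center k E) : ⁅R, ⊤⁆ ≤ Φ.ker := by
  rw [LieSubmodule.lie_le_iff]
  intro f hf g _
  rw [LieHom.mem_ker, LieHom.map_lie, ← lie_skew, (LieModule.mem_maxTrivSubmodule k E E _).mp
    (hR f hf), neg_zero]

theorem LieIdeal.lie_sub_lie_mem_lie_top {k F : Type*} [CommRing k] [LieRing F] [LieAlgebra k F]
    {R : LieIdeal k F} {a a' b b' : F} (ha : a - a' ∈ R) (hb : b - b' ∈ R) :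
    ⁅a, b⁆ - ⁅a', b'⁆ ∈ ⁅R, (⊤ : LieIdeal k F)⁆ := by
  have h := add_mem (LieSubmodule.lie_mem_lie ha (LieSubmodule.mem_top b))
    (LieSubmodule.lie_comm R (⊤ : LieIdeal k F) ▸
      LieSubmodule.lie_mem_lie (LieSubmodule.mem_top a') hb)
  rwa [sub_lie, lie_sub, sub_add_sub_cancel] at h

section TwoCocycle

open LieModule.Cohomology LieAlgebra

variable {k : Type*} [CommRing k] {L : Type*} [LieRing L] [LieAlgebra k L]
  {V : Type*} [AddCommGroup V] [Module k V] (c : twoCocycle k L (TrivialLieModule k L V))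

theorem lie_ofProd_ofProd (x y : L) (a b : TrivialLieModule k L V) :
    ⁅ofProd c (x, a), ofProd c (y, b)⁆ = ofProd c (⁅x, y⁆, c.1 x y) := by
  simp [bracket_ofTwoCocycle, trivial_lie_zero]

def twoCocycleProj : ofTwoCocycle c →ₗ⁅k⁆ L where
  toFun x := ((ofProd c).symm x).1
  map_add' _ _ := rfl
  map_smul' _ _ := rfl
  map_lie' := rfl

@[simp] theorem twoCocycleProj_ofProd (x : L) (a : TrivialLieModule k L V) :
    twoCocycleProj c (ofProd c (x, a)) = x := rfl

def twoCocycleSnd : ofTwoCocycle c →ₗ[k] V where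
  toFun x := TrivialLieModule.equiv k L V ((ofProd c).symm x).2
  map_add' _ _ := rfl
  map_smul' _ _ := rfl

@[simp] theorem twoCocycleSnd_ofProd (x : L) (a : TrivialLieModule k L V) :
    twoCocycleSnd c (ofProd c (x, a)) = TrivialLieModule.equiv k L V a := rfl

theorem twoCocycleProj_surjective : Function.Surjective (twoCocycleProj c) :=
  fun x => ⟨ofProd c (x, 0), rfl⟩

theorem ker_twoCocycleProj_le_center : (twoCocycleProj c).ker ≤ center k (ofTwoCocycle c) := by
  intro x hx y
  obtain ⟨⟨x, a⟩, rfl⟩ := (ofProd c).surjective x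
  obtain ⟨⟨y, b⟩, rfl⟩ := (ofProd c).surjective y
  obtain rfl : x = 0 := hx
  rw [lie_ofProd_ofProd, lie_zero, map_zero, ← of_zero]
  rfl

theorem center_ofTwoCocycle_eq_ker (hc : ∀ x : L, (∀ y, ⁅y, x⁆ = 0 ∧ c.1 y x = 0) → x = 0) :
    center k (ofTwoCocycle c) = (twoCocycleProj c).ker := by
  refine le_antisymm (fun x hx => ?_) (ker_twoCocycleProj_le_center c)
  obtain ⟨⟨x, a⟩, rfl⟩ := (ofProd c).surjective x
  refine hc x fun y => ?_
  have h := (LieModule.mem_maxTrivSubmodule k _ _ _).mp hx (ofProd c (y, 0))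
  rw [lie_ofProd_ofProd, ← of_zero, (ofProd c).injective.eq_iff] at h
  exact Prod.ext_iff.mp h

end TwoCocycle

open LieModule.Cohomology in
theorem isCapable_of_twoCocycle {k : Type} [Field k] {L : Type u} [LieRing L] [LieAlgebra k L]
    {V : Type} [AddCommGroup V] [Module k V] (c : twoCocycle k L (TrivialLieModule k L V))
    (hc : ∀ x : L, (∀ y, ⁅y, x⁆ = 0 ∧ c.1 y x = 0) → x = 0) : IsCapable k L := by
  refine ⟨LieAlgebra.ofTwoCocycle c, inferInstance, inferInstance, ⟨?_⟩⟩
  rw [center_ofTwoCocycle_eq_ker c hc]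
  exact ((twoCocycleProj c).quotKerEquivRange.trans <|
    (LieEquiv.ofEq _ _ (congrArg _ ((twoCocycleProj c).range_eq_top.mpr
      (twoCocycleProj_surjective c)))).trans LieSubalgebra.topEquiv).symm

section Wedge

open LieModule.Cohomology

variable {k : Type} [Field k] {L : Type*} [LieRing L] [LieAlgebra k L] {m : ℕ}

def wedgeForm (φ ψ : Fin m → L →ₗ[k] k) : L →ₗ[k] L →ₗ[k] Fin m → k :=
  LinearMap.mk₂ k (fun u v i => φ i u * ψ i v - ψ i u * φ i v)
    (fun _ _ _ => by ext; simp only [map_add, Pi.add_apply]; ring)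
    (fun _ _ _ => by ext; simp only [map_smul, smul_eq_mul, Pi.smul_apply]; ring)
    (fun _ _ _ => by ext; simp only [map_add, Pi.add_apply]; ring)
    (fun _ _ _ => by ext; simp only [map_smul, smul_eq_mul, Pi.smul_apply]; ring)

@[simp] theorem wedgeForm_apply (φ ψ : Fin m → L →ₗ[k] k) (u v : L) (i : Fin m) :
    wedgeForm φ ψ u v i = φ i u * ψ i v - ψ i u * φ i v := rfl

theorem wedgeForm_self (φ ψ : Fin m → L →ₗ[k] k) (u : L) : wedgeForm φ ψ u u = 0 := by
  ext i
  simp [mul_comm]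

def wedgeCochain (φ ψ : Fin m → L →ₗ[k] k) : twoCochain k L (TrivialLieModule k L (Fin m → k)) :=
  ⟨(wedgeForm φ ψ).compr₂ (TrivialLieModule.equiv k L _).symm.toLinearMap,
    fun u => by simp [wedgeForm_self]⟩

@[simp] theorem wedgeCochain_apply (φ ψ : Fin m → L →ₗ[k] k) (u v : L) :
    TrivialLieModule.equiv k L _ (wedgeCochain φ ψ u v) = wedgeForm φ ψ u v := rfl

theorem wedgeCochain_mem_twoCocycle {α β : L →ₗ[k] k} {z : L}
    (hbr : ∀ u v, ⁅u, v⁆ = (α u * β v - β u * α v) • z) (hα : α z = 0) (hβ : β z = 0)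
    {φ ψ : Fin m → L →ₗ[k] k} (hφ : ∀ i, φ i = α ∨ φ i = β) :
    wedgeCochain φ ψ ∈ twoCocycle k L (TrivialLieModule k L (Fin m → k)) := by
  -- Up to sign, the cyclic sum of `(φ ∧ ψ)(x, ⁅y, t⁆)` is `ψ z • (φ ∧ α ∧ β)(x, y, t)`, and
  -- `φ ∧ α ∧ β = 0` since `φ ∈ {α, β}`.
  rw [mem_twoCocycle_iff_of_trivial]
  intro x y t
  apply (TrivialLieModule.equiv k L (Fin m → k)).injective
  ext i
  rcases hφ i with h | h <;>
    simp only [hbr, h, hα, hβ, map_add, map_smul, wedgeCochain_apply, wedgeForm_apply,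
      LinearMap.smul_apply, Pi.add_apply, Pi.smul_apply, smul_eq_mul, mul_zero, zero_mul,
      sub_zero, zero_sub, mul_neg] <;>
    ring

end Wedge

section FreePresentation

open LieModule.Cohomology LieAlgebra FreeLieAlgebra

variable {k : Type} [Field k] {L : Type u} [LieRing L] [LieAlgebra k L]
  {L' : Type v} [LieRing L'] [LieAlgebra k L']

@[simp] theorem pres_of (x : L) : pres k L (of k x) = x := lift_of_apply _ _

theorem lie_of_mem_ker_pres {x y : L} (h : ⁅x, y⁆ = 0) :
    ⁅of k x, of k y⁆ ∈ (pres k L).ker := by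
  simp [h]

theorem mem_ker_presQ {N : LieIdeal k L} {f : FreeLieAlgebra k L} :
    f ∈ (presQ k L N).ker ↔ pres k L f ∈ N := by
  rw [LieHom.mem_ker, presQ, LieHom.comp_apply]
  exact Submodule.Quotient.mk_eq_zero _

theorem sub_sum_repr_mem_ker_pres {ι : Type*} [Fintype ι] (e : Basis ι k L)
    (f : FreeLieAlgebra k L) : f - ∑ i, e.repr (pres k L f) i • of k (e i) ∈ (pres k L).ker := by
  simp [e.sum_repr]

theorem derived_le_span_lie_basis_sup {ι : Type*} [Fintype ι] (e : Basis ι k L)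
    {R : LieIdeal k (FreeLieAlgebra k L)} (hR : (pres k L).ker ≤ R) :
    (derived k (FreeLieAlgebra k L)).toSubmodule ≤
      Submodule.span k (Set.range fun p : ι × ι => ⁅of k (e p.1), of k (e p.2)⁆) ⊔
        (⁅R, ⊤⁆ : LieIdeal k (FreeLieAlgebra k L)).toSubmodule := by
  rw [derived, LieSubmodule.lieIdeal_oper_eq_linear_span', Submodule.span_le]
  rintro _ ⟨f, -, f', -, rfl⟩
  let s (f : FreeLieAlgebra k L) := ∑ i, e.repr (pres k L f) i • of k (e i)
  rw [← sub_add_cancel ⁅f, f'⁆ ⁅s f, s f'⁆]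
  refine add_mem (Submodule.mem_sup_right (LieIdeal.lie_sub_lie_mem_lie_top
    (hR (sub_sum_repr_mem_ker_pres e f)) (hR (sub_sum_repr_mem_ker_pres e f')))) ?_
  simp only [s, sum_lie, lie_sum, smul_lie, lie_smul]
  exact Submodule.mem_sup_left <| sum_mem fun i _ => Submodule.smul_mem _ _ <| sum_mem fun j _ =>
    Submodule.smul_mem _ _ <| Submodule.subset_span (Set.mem_range_self (j, i))

theorem lie_of_lie_mem_lie_top (ρ : FreeLieAlgebra k L →ₗ⁅k⁆ L') (hρ : (pres k L).ker ≤ ρ.ker)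
    {x y : L} {f : FreeLieAlgebra k L} (hx : ⁅of k x, f⁆ ∈ ρ.ker) (hy : ⁅of k y, f⁆ ∈ ρ.ker) :
    ⁅of k ⁅x, y⁆, f⁆ ∈ ⁅ρ.ker, (⊤ : LieIdeal k (FreeLieAlgebra k L))⁆ := by
  have hxy : ⁅of k ⁅x, y⁆, f⁆ - ⁅⁅of k x, of k y⁆, f⁆ ∈
      ⁅ρ.ker, (⊤ : LieIdeal k (FreeLieAlgebra k L))⁆ :=
    LieIdeal.lie_sub_lie_mem_lie_top (hρ (by simp)) (by simp)
  have hJacobi : ⁅⁅of k x, of k y⁆, f⁆ ∈ ⁅ρ.ker, (⊤ : LieIdeal k (FreeLieAlgebra k L))⁆ := by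
    rw [LieSubmodule.lie_comm, lie_lie]
    exact sub_mem (LieSubmodule.lie_mem_lie (LieSubmodule.mem_top _) hy)
      (LieSubmodule.lie_mem_lie (LieSubmodule.mem_top _) hx)
  simpa using add_mem hxy hJacobi

theorem ker_inf_derived_le {ι : Type*} [Fintype ι] (e : Basis ι k L)
    (ρ : FreeLieAlgebra k L →ₗ⁅k⁆ L') (hρ : (pres k L).ker ≤ ρ.ker) {x y : L}
    (hxy : ⁅of k x, of k y⁆ ∉ ρ.ker) {G : Submodule k (FreeLieAlgebra k L)}
    (hG : G ≤ ρ.ker.toSubmodule)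
    (he : ∀ i j, ⁅of k (e i), of k (e j)⁆ ∈ k ∙ ⁅of k x, of k y⁆ ⊔
      (G ⊔ (⁅ρ.ker, ⊤⁆ : LieIdeal k (FreeLieAlgebra k L)).toSubmodule)) :
    (ρ.ker ⊓ derived k (FreeLieAlgebra k L)).toSubmodule ≤
      G ⊔ (⁅ρ.ker, ⊤⁆ : LieIdeal k (FreeLieAlgebra k L)).toSubmodule := by
  rw [LieSubmodule.inf_toSubmodule]
  refine Submodule.inf_le_of_le_span_singleton_sup
    ((derived_le_span_lie_basis_sup e hρ).trans (sup_le ?_ (le_sup_right.trans le_sup_right)))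
    (sup_le hG (LieSubmodule.lie_le_left _ _)) hxy
  exact Submodule.span_le.mpr (Set.range_subset_iff.mpr fun p => he p.1 p.2)

theorem finrank_multOf_eq {m : ℕ} (ρ : FreeLieAlgebra k L →ₗ⁅k⁆ L') (a b : Fin m → L)
    (hab : ∀ i, ⁅of k (a i), of k (b i)⁆ ∈ ρ.ker)
    (hspan : (ρ.ker ⊓ derived k (FreeLieAlgebra k L)).toSubmodule ≤
      Submodule.span k (Set.range fun i => ⁅of k (a i), of k (b i)⁆) ⊔
        (⁅ρ.ker, ⊤⁆ : LieIdeal k (FreeLieAlgebra k L)).toSubmodule)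
    {L'' : Type*} [LieRing L''] [LieAlgebra k L''] (π : L →ₗ⁅k⁆ L'')
    (hπ : ρ.ker ≤ (π.comp (pres k L)).ker)
    (c : twoCocycle k L'' (TrivialLieModule k L'' (Fin m → k)))
    (hc : ∀ i, TrivialLieModule.equiv k L'' _ (c.1 (π (a i)) (π (b i))) = Pi.single i 1) :
    finrank k (multOf k L ρ) = m := by
  -- `Φ` lifts `π` to the central extension defined by `c`. It maps `ker ρ` into the centre, so
  -- it kills `⁅ker ρ, F⁆`; its `kᵐ`-component pairs the `⁅a i, b i⁆` with the standard basis.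
  let Φ : FreeLieAlgebra k L →ₗ⁅k⁆ ofTwoCocycle c := lift k fun u => ofProd c (π u, 0)
  have hΦ : (twoCocycleProj c).comp Φ = π.comp (pres k L) := hom_ext fun u => by
    simp [Φ, lift_of_apply]
  have hΦT : ⁅ρ.ker, ⊤⁆ ≤ Φ.ker := Φ.lie_top_le_ker_of_map_mem_center fun f hf =>
    ker_twoCocycleProj_le_center c <| by
      rw [LieHom.mem_ker, ← LieHom.comp_apply, hΦ]
      exact hπ hf
  refine Submodule.finrank_quotient_comap_subtype_eq _
    (fun i => ⟨hab i, LieSubmodule.lie_mem_lie (LieSubmodule.mem_top _) (LieSubmodule.mem_top _)⟩)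
    hspan (twoCocycleSnd c ∘ₗ Φ.toLinearMap) (fun f hf => ?_) fun i => ?_
  · simp [LieHom.mem_ker.mp (hΦT hf)]
  · simp [Φ, lift_of_apply, lie_ofProd_ofProd, hc]

end FreePresentation

section Heisenberg

variable {k : Type} [Field k] {L : Type*} [LieRing L] [LieAlgebra k L]

theorem linearIndependent_lie_of_lie_ne_zero {x y : L} (hxy : ⁅x, y⁆ ≠ 0)
    (hz : ∀ u : L, ⁅⁅x, y⁆, u⁆ = 0) : LinearIndependent k ![x, y, ⁅x, y⁆] := by
  rw [Fintype.linearIndependent_iff]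
  intro c hc
  simp only [Fin.sum_univ_three, Matrix.cons_val_zero, Matrix.cons_val_one,
    Matrix.cons_val_two, Matrix.tail_cons, Matrix.head_cons] at hc
  have h0 : c 0 = 0 := by
    have h := congrArg (⁅·, y⁆) hc
    simp only [add_lie, smul_lie, lie_self, hz, smul_zero, add_zero, zero_lie] at h
    exact (smul_eq_zero.mp h).resolve_right hxy
  have h1 : c 1 = 0 := by
    have h := congrArg (⁅x, ·⁆) hc
    simp only [lie_add, lie_smul, lie_self, ← lie_skew _ ⁅x, y⁆, hz, neg_zero, smul_zero,
      zero_add, add_zero, lie_zero] at h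
    exact (smul_eq_zero.mp h).resolve_right hxy
  have h2 : c 2 = 0 := by
    simpa [h0, h1, hxy] using hc
  intro i
  fin_cases i <;> assumption

theorem lie_eq_coord_smul_of_lie_basis (b : Basis (Fin 3) k L) (h01 : ⁅b 0, b 1⁆ = b 2)
    (hz : ∀ u : L, ⁅b 2, u⁆ = 0) (u v : L) :
    ⁅u, v⁆ = (b.coord 0 u * b.coord 1 v - b.coord 1 u * b.coord 0 v) • b 2 := by
  have h10 : ⁅b 1, b 0⁆ = -b 2 := by rw [← lie_skew, h01]
  have hz' (u : L) : ⁅u, b 2⁆ = 0 := by rw [← lie_skew, hz, neg_zero]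
  conv_lhs => rw [← b.sum_repr u, ← b.sum_repr v]
  simp only [Fin.sum_univ_three, add_lie, lie_add, smul_lie, lie_smul, lie_self, h01, h10, hz,
    hz', smul_zero, zero_add, add_zero, smul_neg, Basis.coord_apply]
  module

theorem IsHeisenberg.exists_basis {H : Type u} [LieRing H] [LieAlgebra k H]
    (hH : IsHeisenberg k H 1) : ∃ b : Basis (Fin 3) k H,
      ∀ u v, ⁅u, v⁆ = (b.coord 0 u * b.coord 1 v - b.coord 1 u * b.coord 0 v) • b 2 := by
  obtain ⟨hcenter, hdim, hder⟩ := hH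
  obtain ⟨x, y, hxy⟩ : ∃ x y : H, ⁅x, y⁆ ≠ 0 := by
    by_contra! h
    have hbot : derived k H = ⊥ := (LieSubmodule.lie_eq_bot_iff _ _).mpr fun x _ y _ => h x y
    rw [hbot, finrank_zero_of_subsingleton] at hder
    exact zero_ne_one hder
  have hz (u : H) : ⁅⁅x, y⁆, u⁆ = 0 := by
    have hmem : ⁅x, y⁆ ∈ LieAlgebra.center k H :=
      hcenter ▸ LieSubmodule.lie_mem_lie (LieSubmodule.mem_top x) (LieSubmodule.mem_top y)
    rw [← lie_skew, (LieModule.mem_maxTrivSubmodule k H H _).mp hmem, neg_zero]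
  let b := basisOfLinearIndependentOfCardEqFinrank
    (linearIndependent_lie_of_lie_ne_zero (k := k) hxy hz) (by simp [hdim])
  have hb : ⇑b = ![x, y, ⁅x, y⁆] := coe_basisOfLinearIndependentOfCardEqFinrank _ _
  exact ⟨b, lie_eq_coord_smul_of_lie_basis b (by simp [hb]) (by simpa [hb] using hz)⟩

end Heisenberg

section HeisenbergMultiplier

open LieModule.Cohomology FreeLieAlgebra

variable {k : Type} [Field k] {H : Type u} [LieRing H] [LieAlgebra k H]

noncomputable def heisenbergCocycle (b : Basis (Fin 3) k H)
    (hbr : ∀ u v, ⁅u, v⁆ = (b.coord 0 u * b.coord 1 v - b.coord 1 u * b.coord 0 v) • b 2) :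
    twoCocycle k H (TrivialLieModule k H (Fin 2 → k)) :=
  ⟨wedgeCochain ![b.coord 0, b.coord 1] ![b.coord 2, b.coord 2],
    wedgeCochain_mem_twoCocycle hbr (by simp) (by simp) fun i => by fin_cases i <;> simp⟩

theorem IsHeisenberg.finrank_schurMultiplier (hH : IsHeisenberg k H 1) :
    finrank k (SchurMultiplier k H) = 2 := by
  obtain ⟨b, hbr⟩ := hH.exists_basis
  have hz (i : Fin 3) : ⁅of k (b i), of k (b 2)⁆ ∈ (pres k H).ker :=
    lie_of_mem_ker_pres (by simp [hbr])
  have hg (i : Fin 2) : ⁅of k (![b 0, b 1] i), of k (![b 2, b 2] i)⁆ ∈ (pres k H).ker := by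
    fin_cases i <;> exact hz _
  refine finrank_multOf_eq (pres k H) ![b 0, b 1] ![b 2, b 2] hg ?_ LieHom.id (by simp)
    (heisenbergCocycle b hbr) ?_
  · refine ker_inf_derived_le b (pres k H) le_rfl (x := b 0) (y := b 1)
      (by simpa [hbr] using b.ne_zero 2) (Submodule.span_le.mpr (Set.range_subset_iff.mpr hg))
      (forall_lie_mem_fin_three _ ?_ ?_ ?_)
    · exact Submodule.mem_sup_left (Submodule.mem_span_singleton_self _)
    · exact Submodule.mem_sup_right (Submodule.mem_sup_left (Submodule.subset_span ⟨0, rfl⟩))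
    · exact Submodule.mem_sup_right (Submodule.mem_sup_left (Submodule.subset_span ⟨1, rfl⟩))
  · intro i
    fin_cases i <;> funext j <;> fin_cases j <;> simp [heisenbergCocycle]

end HeisenbergMultiplier

@[simp] theorem lieFst_apply {k : Type} [Field k] {H A : Type u} [LieRing H] [LieAlgebra k H]
    [LieRing A] [LieAlgebra k A] (x : H × A) : lieFst k H A x = x.1 := rfl

section HeisenbergProd

open LieModule.Cohomology FreeLieAlgebra

variable {k : Type} [Field k] {H A : Type u} [LieRing H] [LieAlgebra k H] [LieRing A]
  [LieAlgebra k A] [IsLieAbelian A]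

theorem prod_lie_eq_smul_of_lie_eq {α β : H →ₗ[k] k} {z : H}
    (hbr : ∀ u v : H, ⁅u, v⁆ = (α u * β v - β u * α v) • z) (u v : H × A) :
    ⁅u, v⁆ = (α u.1 * β v.1 - β u.1 * α v.1) • (z, (0 : A)) :=
  Prod.ext (hbr u.1 v.1) (by simp [trivial_lie_zero])

noncomputable def heisenbergProdCocycle (b : Basis (Fin 3) k H)
    (hbr : ∀ u v, ⁅u, v⁆ = (b.coord 0 u * b.coord 1 v - b.coord 1 u * b.coord 0 v) • b 2)
    (cA : Basis (Fin 1) k A) : twoCocycle k (H × A) (TrivialLieModule k (H × A) (Fin 4 → k)) :=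
  let fst (i : Fin 3) := b.coord i ∘ₗ LinearMap.fst k H A
  let snd := cA.coord 0 ∘ₗ LinearMap.snd k H A
  ⟨wedgeCochain ![fst 0, fst 1, fst 0, fst 1] ![fst 2, fst 2, snd, snd],
    wedgeCochain_mem_twoCocycle (α := fst 0) (β := fst 1) (z := (b 2, 0))
      (prod_lie_eq_smul_of_lie_eq hbr) (by simp [fst]) (by simp [fst])
      fun i => by fin_cases i <;> simp⟩

theorem IsHeisenberg.finrank_schurMultiplier_prod (hH : IsHeisenberg k H 1)
    (hA : finrank k A = 1) : finrank k (SchurMultiplier k (H × A)) = 4 := by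
  obtain ⟨b, hbr⟩ := hH.exists_basis
  have hbr' := prod_lie_eq_smul_of_lie_eq (A := A) hbr
  let cA : Basis (Fin 1) k A := Module.basisUnique (Fin 1) hA
  let g : Fin 4 → H × A := ![(b 0, 0), (b 1, 0), (b 0, 0), (b 1, 0)]
  let g' : Fin 4 → H × A := ![(b 2, 0), (b 2, 0), (0, cA 0), (0, cA 0)]
  have hg (i : Fin 4) : ⁅of k (g i), of k (g' i)⁆ ∈ (pres k (H × A)).ker := by
    fin_cases i <;> exact lie_of_mem_ker_pres (by simp [g, g', hbr'])
  refine finrank_multOf_eq (pres k (H × A)) g g' hg ?_ LieHom.id (by simp)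
    (heisenbergProdCocycle b hbr cA) ?_
  · refine ker_inf_derived_le (b.prod cA) _ le_rfl (x := (b 0, 0)) (y := (b 1, 0))
      (by simpa [hbr'] using b.ne_zero 2)
      (Submodule.span_le.mpr (Set.range_subset_iff.mpr hg))
      (forall_lie_mem_basis_prod b cA (of k) ?_ ?_ ?_ fun i => ?_)
    · exact Submodule.mem_sup_left (Submodule.mem_span_singleton_self _)
    · exact Submodule.mem_sup_right (Submodule.mem_sup_left (Submodule.subset_span ⟨0, rfl⟩))
    · exact Submodule.mem_sup_right (Submodule.mem_sup_left (Submodule.subset_span ⟨1, rfl⟩))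
    fin_cases i
    · exact Submodule.mem_sup_right (Submodule.mem_sup_left (Submodule.subset_span ⟨2, rfl⟩))
    · exact Submodule.mem_sup_right (Submodule.mem_sup_left (Submodule.subset_span ⟨3, rfl⟩))
    · have hz : ((b 2, 0) : H × A) = ⁅((b 0, 0) : H × A), (b 1, 0)⁆ := by simp [hbr']
      refine Submodule.mem_sup_right (Submodule.mem_sup_right ?_)
      change ⁅of k ((b 2, 0) : H × A), of k (0, cA 0)⁆ ∈ _
      rw [hz]
      exact lie_of_lie_mem_lie_top _ le_rfl (lie_of_mem_ker_pres (by simp [hbr']))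
        (lie_of_mem_ker_pres (by simp [hbr']))
  · intro i
    fin_cases i <;> funext j <;> fin_cases j <;> simp [heisenbergProdCocycle, g, g']

theorem IsHeisenberg.finrank_multOf_presQ_ker_lieFst (hH : IsHeisenberg k H 1)
    (hA : finrank k A = 1) :
    finrank k (multOf k (H × A) (presQ k (H × A) (lieFst k H A).ker)) = 2 := by
  obtain ⟨b, hbr⟩ := hH.exists_basis
  have hbr' := prod_lie_eq_smul_of_lie_eq (A := A) hbr
  let cA : Basis (Fin 1) k A := Module.basisUnique (Fin 1) hA
  let ρ := presQ k (H × A) (lieFst k H A).ker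
  have hρ {f : FreeLieAlgebra k (H × A)} : f ∈ ρ.ker ↔ (pres k (H × A) f).1 = 0 := mem_ker_presQ
  let g : Fin 2 → H × A := ![(b 0, 0), (b 1, 0)]
  let g' : Fin 2 → H × A := ![(b 2, 0), (b 2, 0)]
  have hg (i : Fin 2) : ⁅of k (g i), of k (g' i)⁆ ∈ ρ.ker := by
    fin_cases i <;> simp [hρ, g, g', hbr']
  have hw : of k ((0, cA 0) : H × A) ∈ ρ.ker := by simp [hρ]
  refine finrank_multOf_eq ρ g g' hg ?_ (lieFst k H A) (fun f hf => hρ.mp hf)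
    (heisenbergCocycle b hbr) ?_
  · refine ker_inf_derived_le (b.prod cA) ρ (ker_le_kerQ _ _ _) (x := (b 0, 0)) (y := (b 1, 0))
      (by simpa [hρ, hbr'] using b.ne_zero 2)
      (Submodule.span_le.mpr (Set.range_subset_iff.mpr hg))
      (forall_lie_mem_basis_prod b cA (of k) ?_ ?_ ?_ fun i => ?_)
    · exact Submodule.mem_sup_left (Submodule.mem_span_singleton_self _)
    · exact Submodule.mem_sup_right (Submodule.mem_sup_left (Submodule.subset_span ⟨0, rfl⟩))
    · exact Submodule.mem_sup_right (Submodule.mem_sup_left (Submodule.subset_span ⟨1, rfl⟩))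
    · exact Submodule.mem_sup_right (Submodule.mem_sup_right
        (LieSubmodule.lie_comm ρ.ker ⊤ ▸ LieSubmodule.lie_mem_lie (LieSubmodule.mem_top _) hw))
  · intro i
    fin_cases i <;> funext j <;> fin_cases j <;> simp [heisenbergCocycle, g, g']

theorem IsHeisenberg.isCapable_prod (hH : IsHeisenberg k H 1) (hA : finrank k A = 1) :
    IsCapable k (H × A) := by
  obtain ⟨b, hbr⟩ := hH.exists_basis
  have hbr' := prod_lie_eq_smul_of_lie_eq (A := A) hbr
  let cA : Basis (Fin 1) k A := Module.basisUnique (Fin 1) hA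
  refine isCapable_of_twoCocycle (heisenbergProdCocycle b hbr cA) fun u hu => ?_
  obtain ⟨hx, hxc⟩ := hu (b 0, 0)
  obtain ⟨hy, -⟩ := hu (b 1, 0)
  -- The brackets with `x`, `y` and the components `x ∧ z`, `x ∧ w` of `c(x, u)` read off the
  -- coordinates of `u`.
  have hc := congrFun (congrArg (TrivialLieModule.equiv k (H × A) (Fin 4 → k)) hxc)
  have h0 : b.coord 0 u.1 = 0 := by simpa [hbr', b.ne_zero 2] using hy
  have h1 : b.coord 1 u.1 = 0 := by simpa [hbr', b.ne_zero 2] using hx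
  have h2 : b.coord 2 u.1 = 0 := by simpa [heisenbergProdCocycle] using hc 0
  have h3 : cA.coord 0 u.2 = 0 := by simpa [heisenbergProdCocycle] using hc 2
  refine Prod.ext (b.forall_coord_eq_zero_iff.mp fun i => ?_)
    (cA.forall_coord_eq_zero_iff.mp fun i => ?_)
  · fin_cases i <;> assumption
  · fin_cases i
    exact h3

end HeisenbergProd

theorem heisenberg_sum_line_capable_general (k : Type) [Field k] (H A : Type u) [LieRing H]
    [LieAlgebra k H] [LieRing A] [LieAlgebra k A]
    (hH : IsHeisenberg k H 1) (hA : IsLieAbelian A) (hAd : Module.finrank k A = 1) :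
    IsCapable k (H × A) ∧
    Module.finrank k (SchurMultiplier k (H × A)) = 4 ∧
    Module.finrank k (multOf k (H × A) (presQ k (H × A) (LieHom.ker (lieFst k H A)))) = 2 ∧
    Module.finrank k (SchurMultiplier k H) = 2 :=
  ⟨hH.isCapable_prod hAd, hH.finrank_schurMultiplier_prod hAd,
    hH.finrank_multOf_presQ_ker_lieFst hAd, hH.finrank_schurMultiplier⟩

/-- `H(1) ⊕ A(1)` is capable, its Schur multiplier has dimension `4`, and
the Schur multiplier of `(H(1) ⊕ A(1))/A(1) = H(1)` has dimension `2`. -/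
theorem heisenberg_sum_line_capable (k : Type) [Field k] (H A : Type u) [LieRing H]
    [LieAlgebra k H] [LieRing A] [LieAlgebra k A] [Module.Finite k H] [Module.Finite k A]
    (hH : IsHeisenberg k H 1) (hA : IsLieAbelian A) (hAd : Module.finrank k A = 1) :
    IsCapable k (H × A) ∧
    Module.finrank k (SchurMultiplier k (H × A)) = 4 ∧
    Module.finrank k (multOf k (H × A) (presQ k (H × A) (LieHom.ker (lieFst k H A)))) = 2 ∧
    Module.finrank k (SchurMultiplier k H) = 2 :=
  heisenberg_sum_line_capable_general k H A hH hA hAd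
end
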